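/- For fixed symmetric positive definite matrices K(t) depending smoothly on a parameter t with K(t)U(t) = F for fixed F, the derivative of the compliance c(t) = U(t)ᵀ K(t) U(t) is c'(t) = -U(t)ᵀ K'(t) U(t). -/

import Mathlib

open Matrix

lemma det_diffAt {n : ℕ} (A : ℝ → Matrix (Fin n) (Fin n) ℝ) (t : ℝ)
    (h : ∀ i j, DifferentiableAt ℝ (fun s => A s i j) t) :
    DifferentiableAt ℝ (fun s => (A s).det) t := by
  simp only [Matrix.det_apply']
  exact DifferentiableAt.fun_sum fun σ _ =>
    (DifferentiableAt.fun_finsetProd fun i _ => h (σ i) i).const_mul _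

theorem compliance_sensitivity (n : ℕ) (hn : 1 ≤ n)
    (K : ℝ → Matrix (Fin n) (Fin n) ℝ) (K' : Matrix (Fin n) (Fin n) ℝ)
    (t : ℝ) (hK : ∀ i j, HasDerivAt (fun s => K s i j) (K' i j) t)
    (hsym : ∀ s, (K s).IsSymm) (hinv : ∀ s, IsUnit (K s).det)
    (F : Fin n → ℝ) (U : ℝ → Fin n → ℝ) (hU : ∀ s, U s = (K s)⁻¹.mulVec F) :
    HasDerivAt (fun s => U s ⬝ᵥ (K s).mulVec (U s))
      (-(U t ⬝ᵥ K'.mulVec (U t))) t := by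
  -- entries of K differentiable
  have hKd : ∀ i j, DifferentiableAt ℝ (fun s => K s i j) t :=
    fun i j => (hK i j).differentiableAt
  -- inverse entries differentiable
  have hinvd : ∀ i j, DifferentiableAt ℝ (fun s => (K s)⁻¹ i j) t := by
    intro i j
    have : (fun s => (K s)⁻¹ i j)
        = fun s => ((K s).det)⁻¹ * ((K s).adjugate i j) := by
      funext s
      rw [Matrix.inv_def]
      simp [Ring.inverse_eq_inv']
    rw [this]
    have hdet0 : (K t).det ≠ 0 := (hinv t).ne_zero
    refine DifferentiableAt.mul ?_ ?_
    · exact (det_diffAt K t hKd).inv hdet0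
    · have : (fun s => (K s).adjugate i j)
          = fun s => ((K s).updateRow j (Pi.single i 1)).det := by
        funext s; rw [Matrix.adjugate_apply]
      rw [this]
      apply det_diffAt
      intro a b
      by_cases hab : a = j
      · subst hab; simp [Matrix.updateRow_apply]
      · simp only [Matrix.updateRow_apply, if_neg hab]
        exact hKd a b
  -- U differentiable
  have hUd : ∀ j, DifferentiableAt ℝ (fun s => U s j) t := by
    intro j
    have : (fun s => U s j) = fun s => ∑ k, (K s)⁻¹ j k * F k := by
      funext s; rw [hU s]; rfl
    rw [this]
    exact DifferentiableAt.fun_sum fun k _ => (hinvd j k).mul_const _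
  set U' : Fin n → ℝ := fun j => deriv (fun s => U s j) t with hU'def
  have hUd' : ∀ j, HasDerivAt (fun s => U s j) (U' j) t :=
    fun j => (hUd j).hasDerivAt
  -- K s mulVec U s = F
  have hKU : ∀ s, (K s).mulVec (U s) = F := by
    intro s
    rw [hU s, Matrix.mulVec_mulVec, Matrix.mul_nonsing_inv _ (hinv s), Matrix.one_mulVec]
  -- derivative of row equations: K' U + K U' = 0 (componentwise)
  have hrow : ∀ i, K'.mulVec (U t) i + (K t).mulVec U' i = 0 := by
    intro i
    have h1 : HasDerivAt (fun s => ∑ j, K s i j * U s j)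
        (∑ j, (K' i j * U t j + K t i j * U' j)) t :=
      HasDerivAt.fun_sum fun j _ => (hK i j).mul (hUd' j)
    have h2 : (fun s => ∑ j, K s i j * U s j) = fun _ => F i := by
      funext s
      have := congrFun (hKU s) i
      simpa [Matrix.mulVec, dotProduct] using this
    rw [h2] at h1
    have h3 := h1.unique (hasDerivAt_const t (F i))
    simp only [Finset.sum_add_distrib] at h3
    simpa [Matrix.mulVec, dotProduct] using h3
  -- hence K.mulVec U' = - K'.mulVec (U t)
  have hKU' : (K t).mulVec U' = -K'.mulVec (U t) := by
    funext i
    have := hrow i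
    simp only [Pi.neg_apply]
    linarith
  -- c s = U s ⬝ᵥ F
  have hc : (fun s => U s ⬝ᵥ (K s).mulVec (U s)) = fun s => U s ⬝ᵥ F := by
    funext s; rw [hKU s]
  rw [hc]
  have hd : HasDerivAt (fun s => U s ⬝ᵥ F) (U' ⬝ᵥ F) t := by
    simp only [dotProduct]
    exact HasDerivAt.fun_sum fun j _ => (hUd' j).mul_const _
  convert hd using 1
  -- show -(U t ⬝ᵥ K'.mulVec (U t)) = U' ⬝ᵥ F
  rw [← hKU t]
  calc -(U t ⬝ᵥ K'.mulVec (U t)) = U t ⬝ᵥ (-K'.mulVec (U t)) := by rw [dotProduct_neg]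
    _ = U t ⬝ᵥ (K t).mulVec U' := by rw [hKU']
    _ = (K t).vecMul (U t) ⬝ᵥ U' := by rw [Matrix.dotProduct_mulVec]
    _ = (K t).mulVec (U t) ⬝ᵥ U' := by
        rw [← Matrix.mulVec_transpose, (hsym t).eq]
    _ = U' ⬝ᵥ (K t).mulVec (U t) := dotProduct_comm _ _
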